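/- arXiv:0803.2583 — 5 statements merged into one kernel-verified Lean document; each statement's English description precedes it below -/
import Mathlib

section
/- Let ν₁ and ν₂ be Borel probability measures on ℝ whose supports are bounded from above, let ε ∈ (0,1), and let ν = ε·ν₁ + (1−ε)·ν₂. Then max_{t∈[0,1]} P(ν)(t) ≥ ε · max_{t∈[0,1]} P(ν₁)(t). -/
open MeasureTheory Set Filter Topology

/-- `F_ν*(t) = sup { x | ν((x,∞)) > t }`. -/
noncomputable def Fstar (ν : Measure ℝ) (t : ℝ) : ℝ :=
  sSup {x : ℝ | t < (ν (Ioi x)).toReal}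

/-- `P(ν)(t) = ∫₀ᵗ F_ν*(s) ds`. -/
noncomputable def Pfun (ν : Measure ℝ) (t : ℝ) : ℝ :=
  ∫ s in Ioc (0:ℝ) t, Fstar ν s

/-- The maximal value of the polygon `P(ν)` over `[0,1]`
    (taken as the supremum over `t ∈ [0,1)`). -/
noncomputable def Pmax (ν : Measure ℝ) : ℝ :=
  ⨆ t ∈ Ico (0:ℝ) 1, Pfun ν t

/-!
Since `ε ν₁ ≤ ν`, every level `x` with `ν₁((x,∞)) > s` has `ν((x,∞)) > ε s`, so
`F_{ν₁}*(s) ≤ F_ν*(ε s)`. Substituting `u = ε s` gives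
`P(ν)(ε t) = ε ∫₀ᵗ F_ν*(ε s) ds ≥ ε P(ν₁)(t)`, and `ε t` ranges inside `[0,1)`.
-/

section Fstar

variable {μ : Measure ℝ} {M t : ℝ}

lemma bddAbove_setOf_lt_measure_Ioi (hM : μ (Ioi M) = 0) (ht : 0 ≤ t) :
    BddAbove {x : ℝ | t < (μ (Ioi x)).toReal} := by
  refine ⟨M, fun x hx => ?_⟩
  by_contra! hMx
  have hx0 : μ (Ioi x) = 0 := measure_mono_null (Ioi_subset_Ioi hMx.le) hM
  simp only [mem_ofPred_eq, hx0, ENNReal.toReal_zero] at hx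
  linarith

lemma nonempty_setOf_lt_measure_Ioi [IsProbabilityMeasure μ] (ht : t < 1) :
    {x : ℝ | t < (μ (Ioi x)).toReal}.Nonempty := by
  have hlim : Tendsto (fun x => (μ (Ioi x)).toReal) atBot (𝓝 1) := by
    have h := tendsto_measure_iUnion_atBot (μ := μ) antitone_Ioi
    rw [iUnion_Ioi, measure_univ] at h
    exact (ENNReal.tendsto_toReal ENNReal.one_ne_top).comp h
  exact (hlim.eventually (eventually_gt_nhds ht)).exists

lemma antitoneOn_Fstar [IsProbabilityMeasure μ] (hM : μ (Ioi M) = 0) :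
    AntitoneOn (Fstar μ) (Ico 0 1) := fun _ hs _ ht hst =>
  csSup_le_csSup (bddAbove_setOf_lt_measure_Ioi hM hs.1) (nonempty_setOf_lt_measure_Ioi ht.2)
    fun _ hx => hst.trans_lt hx

lemma intervalIntegrable_Fstar [IsProbabilityMeasure μ] (hM : μ (Ioi M) = 0)
    (ht : t ∈ Ico 0 1) : IntervalIntegrable (Fstar μ) volume 0 t := by
  refine AntitoneOn.intervalIntegrable ((antitoneOn_Fstar hM).mono ?_)
  rw [uIcc_of_le ht.1]
  exact fun s hs => ⟨hs.1, hs.2.trans_lt ht.2⟩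

lemma Fstar_le_Fstar_mul {ν : Measure ℝ} [IsProbabilityMeasure μ] [IsFiniteMeasure ν]
    {c s : ℝ} (hc : 0 < c) (hs : s ∈ Ico 0 1) (hM : ν (Ioi M) = 0)
    (hle : ENNReal.ofReal c • μ ≤ ν) : Fstar μ s ≤ Fstar ν (c * s) := by
  refine csSup_le_csSup (bddAbove_setOf_lt_measure_Ioi hM (mul_nonneg hc.le hs.1))
    (nonempty_setOf_lt_measure_Ioi hs.2) fun x hx => ?_
  have hcμ : c * (μ (Ioi x)).toReal ≤ (ν (Ioi x)).toReal := by
    simpa [ENNReal.toReal_mul, hc.le] using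
      ENNReal.toReal_mono (measure_ne_top ν _) (hle (Ioi x))
  exact (mul_lt_mul_of_pos_left hx hc).trans_le hcμ

lemma Pfun_eq_intervalIntegral (ht : 0 ≤ t) : Pfun μ t = ∫ s in 0..t, Fstar μ s :=
  (intervalIntegral.integral_of_le ht).symm

lemma mul_Pfun_le_Pfun_mul {ν : Measure ℝ} [IsProbabilityMeasure μ] [IsProbabilityMeasure ν]
    {M' c : ℝ} (hM : μ (Ioi M) = 0) (hM' : ν (Ioi M') = 0) (hc : c ∈ Ioc 0 1)
    (hle : ENNReal.ofReal c • μ ≤ ν) (ht : t ∈ Ico 0 1) : c * Pfun μ t ≤ Pfun ν (c * t) := by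
  obtain ⟨hc0, hc1⟩ := hc
  obtain ⟨ht0, ht1⟩ := ht
  have hscale : ∀ s ∈ Icc 0 t, c * s ∈ Ico 0 1 := fun s hs =>
    ⟨by nlinarith [hs.1], by nlinarith [hs.2]⟩
  have hint : IntervalIntegrable (fun s => Fstar ν (c * s)) volume 0 t := by
    refine AntitoneOn.intervalIntegrable fun a ha b hb hab => ?_
    rw [uIcc_of_le ht0] at ha hb
    exact antitoneOn_Fstar hM' (hscale a ha) (hscale b hb) (by gcongr)
  have hsubst := intervalIntegral.smul_integral_comp_mul_left (a := 0) (b := t) (Fstar ν) c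
  rw [mul_zero, smul_eq_mul] at hsubst
  rw [Pfun_eq_intervalIntegral ht0, Pfun_eq_intervalIntegral (by positivity), ← hsubst]
  gcongr
  exact intervalIntegral.integral_mono_on ht0 (intervalIntegrable_Fstar hM ⟨ht0, ht1⟩) hint
    fun s hs => Fstar_le_Fstar_mul hc0 ⟨hs.1, hs.2.trans_lt ht1⟩ hM' hle

end Fstar

section Pmax

variable {μ : Measure ℝ} {M t : ℝ}

lemma Pfun_le_mul_Fstar_zero [IsProbabilityMeasure μ] (hM : μ (Ioi M) = 0) (ht : t ∈ Ico 0 1) :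
    Pfun μ t ≤ t * Fstar μ 0 := by
  rw [Pfun_eq_intervalIntegral ht.1]
  calc ∫ s in 0..t, Fstar μ s ≤ ∫ _ in 0..t, Fstar μ 0 :=
        intervalIntegral.integral_mono_on ht.1 (intervalIntegrable_Fstar hM ht)
          intervalIntegrable_const fun s hs =>
            antitoneOn_Fstar hM ⟨le_rfl, one_pos⟩ ⟨hs.1, hs.2.trans_lt ht.2⟩ hs.1
    _ = t * Fstar μ 0 := by simp

lemma Pfun_le_Pmax [IsProbabilityMeasure μ] (hM : μ (Ioi M) = 0) (ht : t ∈ Ico 0 1) :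
    Pfun μ t ≤ Pmax μ := by
  refine le_ciSup₂ (f := fun t (_ : t ∈ Ico (0:ℝ) 1) => Pfun μ t) ⟨|Fstar μ 0|, ?_⟩ t ht
  simp only [mem_upperBounds, mem_iUnion, mem_range]
  rintro _ ⟨s, hs, rfl⟩
  have := Pfun_le_mul_Fstar_zero hM hs
  nlinarith [hs.1, hs.2, le_abs_self (Fstar μ 0), abs_nonneg (Fstar μ 0)]

lemma Pmax_nonneg [IsProbabilityMeasure μ] (hM : μ (Ioi M) = 0) : 0 ≤ Pmax μ := by
  simpa [Pfun] using Pfun_le_Pmax hM ⟨le_rfl, one_pos⟩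

lemma Pmax_le {C : ℝ} (hC : 0 ≤ C) (h : ∀ t ∈ Ico 0 1, Pfun μ t ≤ C) : Pmax μ ≤ C :=
  Real.iSup_le (fun t => Real.iSup_le (h t) hC) hC

end Pmax

lemma isProbabilityMeasure_ofReal_smul_add {μ₁ μ₂ : Measure ℝ} [IsProbabilityMeasure μ₁]
    [IsProbabilityMeasure μ₂] {a : ℝ} (ha : a ∈ Icc 0 1) :
    IsProbabilityMeasure (ENNReal.ofReal a • μ₁ + ENNReal.ofReal (1 - a) • μ₂) := by
  constructor
  simp [← ENNReal.ofReal_add ha.1 (sub_nonneg.2 ha.2)]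

/-- Lemma 4.6: if `ν = ε·ν₁ + (1-ε)·ν₂` with `ε ∈ (0,1)` and the supports of the
probability measures `ν₁, ν₂` are bounded from above, then
`max_{t∈[0,1]} P(ν)(t) ≥ ε · max_{t∈[0,1]} P(ν₁)(t)`. -/
theorem stmt0 (ν₁ ν₂ : Measure ℝ) [IsProbabilityMeasure ν₁] [IsProbabilityMeasure ν₂]
    (h₁ : ∃ M : ℝ, ν₁ (Ioi M) = 0) (h₂ : ∃ M : ℝ, ν₂ (Ioi M) = 0)
    (ε : ℝ) (hε : ε ∈ Ioo (0:ℝ) 1)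
    (ν : Measure ℝ)
    (hν : ν = ENNReal.ofReal ε • ν₁ + ENNReal.ofReal (1 - ε) • ν₂) :
    ε * Pmax ν₁ ≤ Pmax ν := by
  obtain ⟨M₁, hM₁⟩ := h₁
  obtain ⟨M₂, hM₂⟩ := h₂
  obtain ⟨hε0, hε1⟩ := hε
  have : IsProbabilityMeasure ν := hν ▸ isProbabilityMeasure_ofReal_smul_add ⟨hε0.le, hε1.le⟩
  have hM : ν (Ioi (max M₁ M₂)) = 0 := by
    simp [hν, measure_mono_null (Ioi_subset_Ioi (le_max_left M₁ M₂)) hM₁,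
      measure_mono_null (Ioi_subset_Ioi (le_max_right M₁ M₂)) hM₂]
  have hle : ENNReal.ofReal ε • ν₁ ≤ ν := hν ▸ Measure.le_add_right le_rfl
  rw [← le_div_iff₀' hε0]
  refine Pmax_le (div_nonneg (Pmax_nonneg hM) hε0.le) fun t ht => ?_
  rw [le_div_iff₀' hε0]
  exact (mul_Pfun_le_Pfun_mul hM₁ hM ⟨hε0, hε1.le⟩ hle ht).trans
    (Pfun_le_Pmax hM ⟨by nlinarith [ht.1], by nlinarith [ht.2]⟩)
end

section
/- Let ν be a Borel measure on ℝ whose support is bounded from below and which is a probability measure. Then max_{t∈[0,1)} P(ν)(t) = ∫_ℝ max(x,0) ν(dx). -/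
/-!
For `s ∈ (0,1)` one has `x < F_ν*(s) ↔ s < ν((x,∞))`, by right-continuity of `x ↦ ν((x,∞))`.
Hence `F_ν*` pushes Lebesgue measure on `(0,1)` forward to `ν`, and `∫ x₊ dν = ∫₀¹ F_ν*(s)₊ ds`.
Since `F_ν*` is nonincreasing and positive exactly on `(0, t₀)` with `t₀ = ν((0,∞))`, `P(ν)`
increases on `[0, t₀]`, where it approaches `∫₀¹ F_ν*(s)₊ ds`, and decreases afterwards.
When `x₊` is not `ν`-integrable, the lower bound on the support keeps `F_ν*` bounded near `1`, so
`F_ν*` fails to be integrable near `0`: every `P(ν)(t)` is then the junk value `0`, as is `∫ x₊ dν`.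
-/

open MeasureTheory Set Filter Topology ProbabilityTheory

section Quantile

variable (ν : Measure ℝ) [IsProbabilityMeasure ν]

lemma measureReal_Ioi_eq_one_sub_cdf (x : ℝ) : ν.real (Ioi x) = 1 - cdf ν x := by
  rw [cdf_eq_real, ← compl_Iic, probReal_compl_eq_one_sub measurableSet_Iic]

lemma tendsto_measureReal_Ioi_atTop : Tendsto (fun x ↦ ν.real (Ioi x)) atTop (𝓝 0) := by
  simpa [measureReal_Ioi_eq_one_sub_cdf] using (tendsto_cdf_atTop ν).const_sub 1

lemma tendsto_measureReal_Ioi_atBot : Tendsto (fun x ↦ ν.real (Ioi x)) atBot (𝓝 1) := by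
  simpa [measureReal_Ioi_eq_one_sub_cdf] using (tendsto_cdf_atBot ν).const_sub 1

lemma continuousWithinAt_measureReal_Ioi (x : ℝ) :
    ContinuousWithinAt (fun y ↦ ν.real (Ioi y)) (Ioi x) x := by
  simp_rw [measureReal_Ioi_eq_one_sub_cdf]
  exact continuousWithinAt_Ioi_iff_Ici.2 (continuousWithinAt_const.sub ((cdf ν).right_continuous x))

lemma lt_Fstar_iff {s : ℝ} (hs : s ∈ Ioo 0 1) (x : ℝ) : x < Fstar ν s ↔ s < ν.real (Ioi x) := by
  have hne : {x : ℝ | s < ν.real (Ioi x)}.Nonempty :=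
    ((tendsto_measureReal_Ioi_atBot ν).eventually (eventually_gt_nhds hs.2)).exists
  have hbdd : BddAbove {x : ℝ | s < ν.real (Ioi x)} := by
    obtain ⟨b, hb⟩ := ((tendsto_measureReal_Ioi_atTop ν).eventually
      (eventually_lt_nhds hs.1)).exists_forall_of_atTop
    exact ⟨b, fun y hy ↦ le_of_not_gt fun hby ↦ (hb y hby.le).not_gt hy⟩
  constructor
  · intro hx
    obtain ⟨y, hy, hxy⟩ := exists_lt_of_lt_csSup hne hx
    exact hy.trans_le (measureReal_mono (Ioi_subset_Ioi hxy.le))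
  · intro hx
    obtain ⟨y, hy, hxy⟩ := (((continuousWithinAt_measureReal_Ioi ν x).eventually
      (eventually_gt_nhds hx)).and self_mem_nhdsWithin).exists
    exact hxy.trans_le (le_csSup hbdd hy)

lemma antitoneOn_Fstar_s1 : AntitoneOn (Fstar ν) (Ioo 0 1) := fun _ hs _ hs' hss' ↦
  le_of_forall_lt fun x hx ↦ (lt_Fstar_iff ν hs x).2 (hss'.trans_lt ((lt_Fstar_iff ν hs' x).1 hx))

lemma aemeasurable_Fstar : AEMeasurable (Fstar ν) (volume.restrict (Ioo 0 1)) :=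
  aemeasurable_restrict_of_antitoneOn measurableSet_Ioo (antitoneOn_Fstar_s1 ν)

lemma Ioo_inter_preimage_Fstar_Ioi (x : ℝ) :
    Ioo 0 1 ∩ Fstar ν ⁻¹' Ioi x = Ioo 0 (ν.real (Ioi x)) := by
  ext s
  constructor
  · rintro ⟨hs, hx⟩
    exact ⟨hs.1, (lt_Fstar_iff ν hs x).1 hx⟩
  · rintro ⟨h0, hx⟩
    have hs : s ∈ Ioo 0 1 := ⟨h0, hx.trans_le measureReal_le_one⟩
    exact ⟨hs, (lt_Fstar_iff ν hs x).2 hx⟩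

theorem map_Fstar_restrict_Ioo : (volume.restrict (Ioo 0 1)).map (Fstar ν) = ν := by
  refine (ext_of_generate_finite _ (BorelSpace.measurable_eq.trans (borel_eq_generateFrom_Ioi ℝ))
    isPiSystem_Ioi ?_ ?_).symm
  · rintro _ ⟨x, rfl⟩
    rw [Measure.map_apply_of_aemeasurable (aemeasurable_Fstar ν) measurableSet_Ioi,
      Measure.restrict_apply' measurableSet_Ioo, inter_comm, Ioo_inter_preimage_Fstar_Ioi,
      Real.volume_Ioo, sub_zero, ofReal_measureReal]
  · rw [Measure.map_apply_of_aemeasurable (aemeasurable_Fstar ν) MeasurableSet.univ,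
      preimage_univ, Measure.restrict_apply_univ, Real.volume_Ioo, measure_univ]
    norm_num

lemma integral_max_Fstar_zero :
    ∫ s in Ioo 0 1, max (Fstar ν s) 0 = ∫ x, max x 0 ∂ν := by
  conv_rhs => rw [← map_Fstar_restrict_Ioo ν]
  exact (integral_map (aemeasurable_Fstar ν)
    (by fun_prop : Continuous fun x : ℝ ↦ max x 0).aestronglyMeasurable).symm

end Quantile

lemma le_Pmax {ν : Measure ℝ} {c : ℝ} (hc : ∀ t ∈ Ico (0:ℝ) 1, Pfun ν t ≤ c) {t : ℝ}
    (ht : t ∈ Ico (0:ℝ) 1) : Pfun ν t ≤ Pmax ν := by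
  refine le_ciSup₂ (f := fun t (_ : t ∈ Ico (0:ℝ) 1) ↦ Pfun ν t) ⟨c, ?_⟩ t ht
  simp only [mem_upperBounds, mem_iUnion, mem_range]
  rintro _ ⟨t, ht, rfl⟩
  exact hc t ht

lemma Pmax_le_s1 {ν : Measure ℝ} {c : ℝ} (hc : ∀ t ∈ Ico (0:ℝ) 1, Pfun ν t ≤ c) (h0 : 0 ≤ c) :
    Pmax ν ≤ c :=
  Real.iSup_le (fun t ↦ Real.iSup_le (hc t) h0) h0

section LowerBound

variable {ν : Measure ℝ} [IsProbabilityMeasure ν] {m : ℝ} (hm : ν (Iio m) = 0)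
include hm

lemma le_Fstar {s : ℝ} (hs : s ∈ Ioo 0 1) : m ≤ Fstar ν s :=
  le_of_forall_lt fun x hx ↦ (lt_Fstar_iff ν hs x).2 <| hs.2.trans_eq <| by
    rw [← compl_Iic, probReal_compl_eq_one_sub measurableSet_Iic,
      (measureReal_eq_zero_iff).2 (measure_mono_null (Iic_subset_Iio.2 hx) hm), sub_zero]

lemma integrableOn_Fstar_iff :
    IntegrableOn (Fstar ν) (Ioo 0 1) ↔ Integrable (fun x ↦ max x 0) ν := by
  conv_rhs => rw [← map_Fstar_restrict_Ioo ν]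
  rw [integrable_map_measure (by fun_prop : Continuous fun x : ℝ ↦ max x 0).aestronglyMeasurable
    (aemeasurable_Fstar ν)]
  refine ⟨Integrable.pos_part, fun h ↦ (h.add (integrable_const |m|)).mono'
    (aemeasurable_Fstar ν).aestronglyMeasurable ?_⟩
  filter_upwards [ae_restrict_mem measurableSet_Ioo] with s hs
  have := le_Fstar hm hs
  rw [Real.norm_eq_abs, abs_le]
  constructor <;> simp only [Pi.add_apply, Function.comp_apply] <;>
    linarith [neg_abs_le m, le_abs_self m, le_max_left (Fstar ν s) 0, le_max_right (Fstar ν s) 0]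

lemma Pfun_eq_zero_of_not_integrable (hν : ¬ Integrable (fun x ↦ max x 0) ν) {t : ℝ}
    (ht : t ∈ Ico (0:ℝ) 1) : Pfun ν t = 0 := by
  rcases ht.1.eq_or_lt with rfl | ht0
  · simp [Pfun]
  refine integral_undef fun (hint : IntegrableOn (Fstar ν) (Ioc 0 t) volume) ↦
    hν ((integrableOn_Fstar_iff hm).1 ?_)
  rw [← Ioc_union_Ioo_eq_Ioo ht0.le ht.2]
  refine hint.union (Integrable.mono' (g := fun _ ↦ max |m| |Fstar ν t|)
    (integrableOn_const measure_Ioo_lt_top.ne)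
    ((aemeasurable_Fstar ν).mono_set (Ioo_subset_Ioo_left ht0.le)).aestronglyMeasurable ?_)
  filter_upwards [ae_restrict_mem measurableSet_Ioo] with s hs
  have hs' : s ∈ Ioo 0 1 := ⟨ht0.trans hs.1, hs.2⟩
  exact abs_le_max_abs_abs (le_Fstar hm hs') (antitoneOn_Fstar_s1 ν ⟨ht0, ht.2⟩ hs' hs.1.le)

lemma Pfun_le_integral (hint : Integrable (fun x ↦ max x 0) ν) {t : ℝ} (ht : t ∈ Ico (0:ℝ) 1) :
    Pfun ν t ≤ ∫ x, max x 0 ∂ν := by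
  have hsub : Ioc 0 t ⊆ Ioo 0 1 := Ioc_subset_Ioo_right ht.2
  have hF := (integrableOn_Fstar_iff hm).2 hint
  have hF_pos : IntegrableOn (fun s ↦ max (Fstar ν s) 0) (Ioo 0 1) := hF.pos_part
  rw [← integral_max_Fstar_zero]
  calc Pfun ν t ≤ ∫ s in Ioc 0 t, max (Fstar ν s) 0 :=
        setIntegral_mono (hF.mono_set hsub) (hF_pos.mono_set hsub) fun s ↦ le_max_left _ _
    _ ≤ _ := setIntegral_mono_set hF_pos (Eventually.of_forall fun s ↦ le_max_right _ _)
        hsub.eventuallyLE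

lemma integral_le_Pmax (hint : Integrable (fun x ↦ max x 0) ν) : ∫ x, max x 0 ∂ν ≤ Pmax ν := by
  set t₀ := ν.real (Ioi 0)
  have hF_pos : IntegrableOn (fun s ↦ max (Fstar ν s) 0) (Ioo 0 1) :=
    ((integrableOn_Fstar_iff hm).2 hint).pos_part
  have hpos : ∀ s ∈ Ioo (0:ℝ) 1, 0 < Fstar ν s ↔ s < t₀ := fun s hs ↦ lt_Fstar_iff ν hs 0
  have ht₀ : t₀ ∈ Icc 0 1 := ⟨measureReal_nonneg, measureReal_le_one⟩
  have h_integral_eq : ∫ x, max x 0 ∂ν = ∫ s in (0)..t₀, max (Fstar ν s) 0 := by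
    rw [← integral_max_Fstar_zero, intervalIntegral.integral_of_le ht₀.1,
      integral_Ioc_eq_integral_Ioo, setIntegral_eq_of_subset_of_forall_sdiff_eq_zero
        measurableSet_Ioo (Ioo_subset_Ioo_right ht₀.2)]
    rintro s ⟨hs, hst⟩
    exact max_eq_right (not_lt.1 fun h ↦ hst ⟨hs.1, (hpos s hs).1 h⟩)
  have h_primitive_eq_Pfun : ∀ t ∈ Ico 0 t₀, ∫ s in (0)..t, max (Fstar ν s) 0 = Pfun ν t := by
    rintro t ⟨h0, ht⟩
    rw [intervalIntegral.integral_of_le h0, Pfun]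
    refine setIntegral_congr_fun measurableSet_Ioc fun s hs ↦ max_eq_left ?_
    have hst : s < t₀ := hs.2.trans_lt ht
    exact ((hpos s ⟨hs.1, hst.trans_le ht₀.2⟩).2 hst).le
  have hcont : ContinuousOn (fun t ↦ ∫ s in (0)..t, max (Fstar ν s) 0) (Icc 0 1) := by
    rw [← uIcc_of_le zero_le_one]
    refine intervalIntegral.continuousOn_primitive_interval ?_
    rwa [uIcc_of_le zero_le_one, integrableOn_Icc_iff_integrableOn_Ioo]
  have hle : ∀ t ∈ Ico (0:ℝ) 1, Pfun ν t ≤ Pmax ν :=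
    fun _ ↦ le_Pmax fun _ ↦ Pfun_le_integral hm hint
  rw [h_integral_eq]
  rcases ht₀.1.eq_or_lt with h | h
  · rw [← h, intervalIntegral.integral_same]
    simpa [Pfun] using hle 0 ⟨le_rfl, one_pos⟩
  -- `t₀ = 1 ∉ [0,1)` is possible, so the value at `t₀` is reached as a limit from the left.
  · refine ContinuousWithinAt.closure_le (closure_Ico h.ne ▸ right_mem_Icc.2 h.le)
      ((hcont t₀ ht₀).mono fun t ht ↦ ⟨ht.1, ht.2.le.trans ht₀.2⟩) continuousWithinAt_const
      fun t ht ↦ (h_primitive_eq_Pfun t ht).trans_le (hle t ⟨ht.1, ht.2.trans_le ht₀.2⟩)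

end LowerBound

/-- Lemma 7.1: for a Borel probability measure `ν` on `ℝ` whose support is bounded from
below, `max_{t∈[0,1)} P(ν)(t) = ∫ x₊ ν(dx)`. -/
theorem stmt1 (ν : Measure ℝ) [IsProbabilityMeasure ν]
    (h : ∃ m : ℝ, ν (Iio m) = 0) :
    Pmax ν = ∫ x, max x 0 ∂ν := by
  obtain ⟨m, hm⟩ := h
  by_cases hint : Integrable (fun x ↦ max x 0) ν
  · exact le_antisymm (Pmax_le_s1 (fun t ↦ Pfun_le_integral hm hint)
      (integral_nonneg fun x ↦ le_max_right x 0)) (integral_le_Pmax hm hint)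
  · have hP : ∀ t ∈ Ico (0:ℝ) 1, Pfun ν t = 0 := fun t ↦ Pfun_eq_zero_of_not_integrable hm hint
    have h0 : (0:ℝ) ∈ Ico (0:ℝ) 1 := ⟨le_rfl, one_pos⟩
    rw [integral_undef hint]
    exact le_antisymm (Pmax_le_s1 (fun t ht ↦ (hP t ht).le) le_rfl)
      ((hP 0 h0).ge.trans (le_Pmax (fun t ht ↦ (hP t ht).le) h0))
end

section
/- Let 0 → V' → V → V'' → 0 be an exact sequence of finite-dimensional filtered vector spaces over a field k (with V' carrying the induced filtration and V'' the quotient filtration), where V ≠ 0. Then ν_V = (dim V'/dim V)·ν_{V'} + (dim V''/dim V)·ν_{V''}. -/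
open MeasureTheory Set Filter Module

/-- `μ` is the Borel probability measure associated to the filtration `F` of the
finite-dimensional vector space `V`: it is characterized by
`μ([a,∞)) = dim F_a V / dim V` for every `a` (and is the zero measure if `V = 0`). -/
def IsAssocMeasure {k V : Type*} [Field k] [AddCommGroup V] [Module k V]
    (F : ℝ → Submodule k V) (μ : Measure ℝ) : Prop :=
  if finrank k V = 0 then μ = 0
  else IsProbabilityMeasure μ ∧
    ∀ a : ℝ, μ (Ici a) = ENNReal.ofReal ((finrank k (F a) : ℝ) / (finrank k V : ℝ))

/-! `F_a V ∩ V'` is the kernel of `F_a V → V ⧸ V'`, whose image is the quotient filtration, so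
`dim F_a V = dim F_a V' + dim F_a V''` for every `a`. Dividing by `dim V`, both sides of the claimed
identity give `[a, ∞)` the same mass, and a finite measure on `ℝ` is determined by these masses. -/

theorem Submodule.finrank_comap_subtype_add_finrank_map_mkQ {k V : Type*} [DivisionRing k]
    [AddCommGroup V] [Module k V] (V' W : Submodule k V) [FiniteDimensional k W] :
    finrank k (W.comap V'.subtype) + finrank k (W.map V'.mkQ) = finrank k W := by
  have h_inf_left : finrank k (W.comap V'.subtype) = finrank k (V' ⊓ W : Submodule k V) := by
    rw [← Submodule.map_comap_subtype, Submodule.finrank_map_subtype_eq]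
  have h_inf_right : finrank k (V'.comap W.subtype) = finrank k (W ⊓ V' : Submodule k V) := by
    rw [← Submodule.map_comap_subtype, Submodule.finrank_map_subtype_eq]
  have h_rank_nullity := LinearMap.finrank_range_add_finrank_ker (V'.mkQ.comp W.subtype)
  rw [LinearMap.range_comp, Submodule.range_subtype, LinearMap.ker_comp, Submodule.ker_mkQ,
    h_inf_right] at h_rank_nullity
  rw [h_inf_left, inf_comm]
  omega

namespace IsAssocMeasure

variable {k U : Type*} [Field k] [AddCommGroup U] [Module k U] {G : ℝ → Submodule k U}
  {ν : Measure ℝ}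

theorem isProbabilityMeasure [Nontrivial U] [FiniteDimensional k U] (h : IsAssocMeasure G ν) :
    IsProbabilityMeasure ν := by
  rw [IsAssocMeasure, if_neg finrank_pos.ne'] at h
  exact h.1

theorem apply_Ici [Nontrivial U] [FiniteDimensional k U] (h : IsAssocMeasure G ν) (a : ℝ) :
    ν (Ici a) = ENNReal.ofReal ((finrank k (G a) : ℝ) / (finrank k U : ℝ)) := by
  rw [IsAssocMeasure, if_neg finrank_pos.ne'] at h
  exact h.2 a

theorem smul_apply_Ici [FiniteDimensional k U] (h : IsAssocMeasure G ν) (c a : ℝ) :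
    (ENNReal.ofReal ((finrank k U : ℝ) / c) • ν) (Ici a)
      = ENNReal.ofReal ((finrank k (G a) : ℝ) / c) := by
  rcases subsingleton_or_nontrivial U with hU | hU
  · rw [IsAssocMeasure, if_pos finrank_zero_of_subsingleton] at h
    simp [h, finrank_zero_of_subsingleton]
  · have hdim : (finrank k U : ℝ) ≠ 0 := by exact_mod_cast finrank_pos.ne'
    rw [Measure.smul_apply, smul_eq_mul, h.apply_Ici a, ← ENNReal.ofReal_mul' (by positivity)]
    congr 1
    field_simp

end IsAssocMeasure

theorem stmt8_general {k V : Type*} [Field k] [AddCommGroup V] [Module k V]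
    [FiniteDimensional k V] [Nontrivial V]
    (F : ℝ → Submodule k V)
    (V' : Submodule k V)
    (μ μ' μ'' : Measure ℝ)
    (hμ : IsAssocMeasure F μ)
    (hμ' : IsAssocMeasure (fun a => (F a).comap V'.subtype) μ')
    (hμ'' : IsAssocMeasure (fun a => (F a).map V'.mkQ) μ'') :
    μ = ENNReal.ofReal ((finrank k V' : ℝ) / (finrank k V : ℝ)) • μ'
      + ENNReal.ofReal ((finrank k (V ⧸ V') : ℝ) / (finrank k V : ℝ)) • μ'' := by
  have := hμ.isProbabilityMeasure
  refine Measure.ext_of_Ici _ _ fun a => ?_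
  rw [Measure.add_apply, hμ'.smul_apply_Ici, hμ''.smul_apply_Ici, hμ.apply_Ici,
    ← ENNReal.ofReal_add (by positivity) (by positivity), ← add_div, ← Nat.cast_add,
    Submodule.finrank_comap_subtype_add_finrank_map_mkQ]

/-- Proposition: for an exact sequence `0 → V' → V → V'' → 0` of finite-dimensional
filtered vector spaces (`V'` with the induced filtration, `V'' = V/V'` with the quotient
filtration) with `V ≠ 0`, one has
`ν_V = (dim V'/dim V)·ν_{V'} + (dim V''/dim V)·ν_{V''}`. -/
theorem stmt8 {k V : Type*} [Field k] [AddCommGroup V] [Module k V]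
    [FiniteDimensional k V] [Nontrivial V]
    (F : ℝ → Submodule k V)
    (hanti : Antitone F)
    (hexh : ∃ a : ℝ, F a = ⊤)
    (hsep : ∃ a : ℝ, F a = ⊥)
    (hlc : ∀ a : ℝ, F a = ⨅ (b : ℝ) (_ : b < a), F b)
    (V' : Submodule k V)
    (μ μ' μ'' : Measure ℝ)
    (hμ : IsAssocMeasure F μ)
    (hμ' : IsAssocMeasure (fun a => (F a).comap V'.subtype) μ')
    (hμ'' : IsAssocMeasure (fun a => (F a).map V'.mkQ) μ'') :
    μ = ENNReal.ofReal ((finrank k V' : ℝ) / (finrank k V : ℝ)) • μ'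
      + ENNReal.ofReal ((finrank k (V ⧸ V') : ℝ) / (finrank k V : ℝ)) • μ'' :=
  stmt8_general F V' μ μ' μ'' hμ hμ' hμ''
end

section
/- Let Ē be a nonzero Hermitian vector bundle on Spec O_K with μ̂_min(Ē) ≥ 0. Then |ĥ⁰(Ē) − deĝ(Ē)| ≤ log|Δ_K|·rank(E) + C₀(rank E), where C₀ is the function from the Gillet–Soulé arithmetic Riemann–Roch inequality and Δ_K is the discriminant of K. -/
/-- An abstract model of the theory of Hermitian vector bundles on `Spec 𝓞 K`:
a collection `Bund` of bundles, with rank, Arakelov degree `deĝ`, `ĥ⁰`, maximal and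
minimal slopes, the Serre duality operation `E ↦ ω̄_{𝓞 K} ⊗ Ē^∨`, the twists
`E ↦ Ē ⊗ L̄_a`, the constant `discr = log|Δ_K| ≥ 0`, and the increasing function `C₀`
from the Gillet–Soulé arithmetic Riemann–Roch inequality, together with the assumed
properties (Riemann–Roch inequality; `deĝ(ω̄) = log|Δ_K|` in the form
`μ̂_max(ω̄ ⊗ Ē^∨) = log|Δ_K| − μ̂_min(Ē)`; vanishing of `ĥ⁰` for negative maximal
slope; behaviour under twisting). -/
structure ArakelovData where
  Bund : Type*
  rank : Bund → ℕ
  deg : Bund → ℝ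
  h0 : Bund → ℝ
  mumax : Bund → ℝ
  mumin : Bund → ℝ
  serre : Bund → Bund
  twist : Bund → ℝ → Bund
  discr : ℝ
  C0 : ℕ → ℝ
  discr_nonneg : 0 ≤ discr
  C0_mono : Monotone C0
  C0_nonneg : ∀ n, 0 ≤ C0 n
  h0_nonneg : ∀ E, 0 ≤ h0 E
  riemann_roch : ∀ E, |h0 E - h0 (serre E) - deg E| ≤ C0 (rank E)
  serre_rank : ∀ E, rank (serre E) = rank E
  mumax_serre : ∀ E, rank E ≠ 0 → mumax (serre E) = discr - mumin E
  h0_vanish : ∀ E, rank E ≠ 0 → mumax E < 0 → h0 E = 0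
  rank_twist : ∀ E a, rank (twist E a) = rank E
  deg_twist : ∀ E a, deg (twist E a) = deg E + a * rank E
  mumin_twist : ∀ E a, mumin (twist E a) = mumin E + a
  mumax_twist : ∀ E a, mumax (twist E a) = mumax E + a
  h0_twist_mono : ∀ E a, 0 ≤ a → h0 E ≤ h0 (twist E a)

/-- Lemma 3.3 3): for a nonzero Hermitian vector bundle `Ē` on `Spec 𝓞 K` with
`μ̂_min(Ē) ≥ 0`, one has `|ĥ⁰(Ē) − deĝ(Ē)| ≤ log|Δ_K|·rank E + C₀(rank E)`. -/
theorem stmt12 (A : ArakelovData) (E : A.Bund) (hE : A.rank E ≠ 0)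
    (h : 0 ≤ A.mumin E) :
    |A.h0 E - A.deg E| ≤ A.discr * (A.rank E : ℝ) + A.C0 (A.rank E) := by
  have hr : (0:ℝ) < (A.rank E : ℝ) := by
    exact_mod_cast Nat.pos_of_ne_zero hE
  have upper : A.h0 E - A.deg E ≤ A.discr * (A.rank E : ℝ) + A.C0 (A.rank E) := by
    have key : ∀ ε > (0:ℝ), A.h0 E - A.deg E ≤
        A.discr * (A.rank E : ℝ) + A.C0 (A.rank E) + ε := by
      intro ε hε
      have hdp : 0 < ε / (A.rank E : ℝ) := div_pos hε hr
      have ha0 : 0 ≤ A.discr + ε / (A.rank E : ℝ) := by linarith [A.discr_nonneg]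
      set a := A.discr + ε / (A.rank E : ℝ) with ha
      have hvan : A.h0 (A.serre (A.twist E a)) = 0 := by
        apply A.h0_vanish _ (by rw [A.serre_rank, A.rank_twist]; exact hE)
        rw [A.mumax_serre _ (by rw [A.rank_twist]; exact hE), A.mumin_twist, ha]
        linarith
      have hrr := abs_le.mp (A.riemann_roch (A.twist E a))
      rw [hvan, A.deg_twist, A.rank_twist] at hrr
      have hmono := A.h0_twist_mono E a ha0
      have hdiv : ε / (A.rank E : ℝ) * (A.rank E : ℝ) = ε :=
        div_mul_cancel₀ ε (ne_of_gt hr)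
      have h2 := hrr.2
      rw [ha] at h2
      nlinarith [h2, hmono, hdiv]
    exact le_of_forall_pos_le_add key
  have lower : -(A.discr * (A.rank E : ℝ) + A.C0 (A.rank E)) ≤ A.h0 E - A.deg E := by
    have hrr := abs_le.mp (A.riemann_roch E)
    have h1 := A.h0_nonneg (A.serre E)
    nlinarith [A.discr_nonneg, hr.le, hrr.1]
  exact abs_le.mpr ⟨lower, upper⟩
end

section
/- Let Ē be a Hermitian vector bundle on Spec O_K. Then |ĥ⁰(Ē) − deĝ₊(Ē)| ≤ rank(E)·log|Δ_K| + C₀(rank E), where deĝ₊(Ē) = max_{t∈[0,1]} P_Ē(t) is the positive degree (maximum of the Harder–Narasimhan polygon). -/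
/-- An abstract model of the theory of Hermitian vector bundles on `Spec 𝓞 K`, with the
assumed properties needed for the comparison of `ĥ⁰` and the positive degree `deĝ₊`:
(1) vanishing of `ĥ⁰` when `μ̂_max < 0`; (2) `|ĥ⁰ − deĝ| ≤ rank·log|Δ_K| + C₀(rank)`
when `μ̂_min ≥ 0`; (3) subadditivity of `ĥ⁰` in short exact sequences `SES F E Q`
(`F` a subbundle with induced metrics, `Q` the quotient); and the Harder–Narasimhan
characterization of `deĝ₊(Ē)` as `deĝ(Ē_j)` where `Ē_j` is the largest step of the
HN flag all of whose subquotient slopes are `≥ 0` (so that `Ē/Ē_j` has `μ̂_max < 0`). -/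
structure HNData where
  Bund : Type*
  rank : Bund → ℕ
  deg : Bund → ℝ
  h0 : Bund → ℝ
  degplus : Bund → ℝ
  mumax : Bund → ℝ
  mumin : Bund → ℝ
  SES : Bund → Bund → Bund → Prop
  discr : ℝ
  C0 : ℕ → ℝ
  discr_nonneg : 0 ≤ discr
  C0_mono : Monotone C0
  C0_nonneg : ∀ n, 0 ≤ C0 n
  h0_nonneg : ∀ E, 0 ≤ h0 E
  h0_zero : ∀ E, rank E = 0 → h0 E = 0
  deg_zero : ∀ E, rank E = 0 → deg E = 0
  degplus_zero : ∀ E, rank E = 0 → degplus E = 0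
  h0_vanish : ∀ E, rank E ≠ 0 → mumax E < 0 → h0 E = 0
  h0_deg : ∀ E, rank E ≠ 0 → 0 ≤ mumin E →
    |h0 E - deg E| ≤ (rank E : ℝ) * discr + C0 (rank E)
  ses_rank : ∀ F E Q, SES F E Q → rank E = rank F + rank Q
  ses_h0 : ∀ F E Q, SES F E Q → h0 F ≤ h0 E ∧ h0 E ≤ h0 F + h0 Q
  hnflag : ∀ E, rank E ≠ 0 → ∃ F Q, SES F E Q ∧ degplus E = deg F ∧
    (rank F ≠ 0 → 0 ≤ mumin F) ∧ (rank Q ≠ 0 → mumax Q < 0)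

/-- Proposition 3.4: for any Hermitian vector bundle `Ē` on `Spec 𝓞 K`,
`|ĥ⁰(Ē) − deĝ₊(Ē)| ≤ rank E·log|Δ_K| + C₀(rank E)`. -/
theorem stmt13 (A : HNData) (E : A.Bund) :
    |A.h0 E - A.degplus E| ≤ (A.rank E : ℝ) * A.discr + A.C0 (A.rank E) := by
  have hrhs : (0:ℝ) ≤ (A.rank E : ℝ) * A.discr + A.C0 (A.rank E) := by
    have := A.C0_nonneg (A.rank E)
    have := A.discr_nonneg
    positivity
  by_cases hE : A.rank E = 0
  · rw [A.h0_zero E hE, A.degplus_zero E hE]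
    simpa using hrhs
  · obtain ⟨F, Q, hses, hdeg, hmin, hmax⟩ := A.hnflag E hE
    have hrk := A.ses_rank F E Q hses
    have ⟨h1, h2⟩ := A.ses_h0 F E Q hses
    have hQ0 : A.h0 Q = 0 := by
      by_cases hQ : A.rank Q = 0
      · exact A.h0_zero Q hQ
      · exact A.h0_vanish Q hQ (hmax hQ)
    have hEF : A.h0 E = A.h0 F := le_antisymm (by linarith) h1
    by_cases hF : A.rank F = 0
    · have : A.deg F = 0 := A.deg_zero F hF
      have hF0 : A.h0 F = 0 := A.h0_zero F hF
      rw [hdeg, hEF, hF0, this]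
      simpa using hrhs
    · have hb := A.h0_deg F hF (hmin hF)
      have hle : A.rank F ≤ A.rank E := by omega
      have h3 : (A.rank F : ℝ) * A.discr ≤ (A.rank E : ℝ) * A.discr :=
        mul_le_mul_of_nonneg_right (by exact_mod_cast hle) A.discr_nonneg
      have h4 := A.C0_mono hle
      rw [hdeg, hEF]
      linarith
end
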